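/- For every integer k ≥ 2 and every chord diagram d, the value R_k(d) is congruent modulo 2 to the number E_{2k}(γ(d)) of 2k-cycles in the intersection graph of d. -/

import Mathlib

open Finset
open scoped Classical

/-- The cyclic successor of an element of `Fin m`. -/
def cyclicSucc {m : ℕ} (a : Fin m) : Fin m :=
  ⟨((a : ℕ) + 1) % m, Nat.mod_lt _ a.pos⟩

/-- The cyclic predecessor of an element of `Fin m`. -/
def cyclicPred {m : ℕ} (a : Fin m) : Fin m :=
  ⟨((a : ℕ) + (m - 1)) % m, Nat.mod_lt _ a.pos⟩

/-- `f : Fin l → V` traces an `l`-cycle of `G`: it is injective and cyclically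
consecutive vertices are adjacent. -/
def IsCycleMap {V : Type} (G : SimpleGraph V) (l : ℕ) (f : Fin l → V) : Prop :=
  Function.Injective f ∧ ∀ i : Fin l, G.Adj (f i) (f (cyclicSucc i))

/-- The number `E_l(G)` of `l`-cycles of `G`, counted up to rotation and reflection
(each such cycle is traced by exactly `2 * l` maps `Fin l → V`). -/
noncomputable def cycleCount {V : Type} [Fintype V] (G : SimpleGraph V) (l : ℕ) : ℕ :=
  (Finset.univ.filter (fun f : Fin l → V => IsCycleMap G l f)).card / (2 * l)

/-- `o` is an orientation of `G`: every edge gets exactly one direction. -/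
def IsOrientation {V : Type} (G : SimpleGraph V) (o : V → V → Prop) : Prop :=
  ∀ ⦃x y : V⦄, G.Adj x y → (o x y ↔ ¬ o y x)

/-- The sign of a cycle map with respect to a direction relation `o`:
`+1` iff the number of edges agreeing with the traversal is even. -/
noncomputable def cycleSign {V : Type} {l : ℕ} (o : V → V → Prop) (f : Fin l → V) : ℤ :=
  (-1) ^ (Finset.univ.filter (fun i : Fin l => o (f i) (f (cyclicSucc i)))).card

/-- The sum of signs of all `l`-cycles of `G` (counted up to rotation and
reflection) with respect to the direction relation `o`. -/
noncomputable def signedCycleSum {V : Type} [Fintype V] (G : SimpleGraph V)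
    (o : V → V → Prop) (l : ℕ) : ℤ :=
  (∑ f ∈ Finset.univ.filter (fun f : Fin l → V => IsCycleMap G l f),
    cycleSign o f) / (2 * (l : ℤ))

/-- The graph `Γ'_AB`: toggle the adjacency between the vertices `A` and `B`. -/
def toggleEdge {V : Type} (G : SimpleGraph V) (A B : V) : SimpleGraph V where
  Adj x y := x ≠ y ∧ (G.Adj x y ↔ ¬((x = A ∧ y = B) ∨ (x = B ∧ y = A)))
  symm := ⟨by
    intro x y h
    obtain ⟨h1, h2⟩ := h
    refine ⟨h1.symm, ?_⟩
    rw [G.adj_comm]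
    tauto⟩
  loopless := ⟨fun x h => h.1 rfl⟩

/-- The graph `Γ̃_AB`: toggle the adjacency between `A` and every vertex
`C ∉ {A, B}` adjacent to `B` in `Γ`. -/
def tildeGraph {V : Type} (G : SimpleGraph V) (A B : V) : SimpleGraph V where
  Adj x y := x ≠ y ∧
    (G.Adj x y ↔ ¬((x = A ∧ y ≠ B ∧ G.Adj y B) ∨ (y = A ∧ x ≠ B ∧ G.Adj x B)))
  symm := ⟨by
    intro x y h
    obtain ⟨h1, h2⟩ := h
    refine ⟨h1.symm, ?_⟩
    rw [G.adj_comm]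
    tauto⟩
  loopless := ⟨fun x h => h.1 rfl⟩

/-- A chord diagram of order `n`: a partition of the `2 * n` cyclically ordered
points `0, 1, …, 2n - 1` into `n` two-element blocks (chords), here recorded by
the function assigning to each point its chord. -/
structure ChordDiagram (n : ℕ) where
  chord : Fin (2 * n) → Fin n
  fiber_two : ∀ i : Fin n, (Finset.univ.filter (fun x => chord x = i)).card = 2

namespace ChordDiagram

variable {n : ℕ}

/-- The pair of endpoints of the chord `i`. -/
def endpoints (d : ChordDiagram n) (i : Fin n) : Finset (Fin (2 * n)) :=
  Finset.univ.filter (fun x => d.chord x = i)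

lemma endpoints_nonempty (d : ChordDiagram n) (i : Fin n) : (d.endpoints i).Nonempty := by
  rw [← Finset.card_pos, endpoints, d.fiber_two]
  norm_num

/-- The smaller endpoint of the chord `i`. -/
def lo (d : ChordDiagram n) (i : Fin n) : Fin (2 * n) :=
  (d.endpoints i).min' (d.endpoints_nonempty i)

/-- The larger endpoint of the chord `i`. -/
def hi (d : ChordDiagram n) (i : Fin n) : Fin (2 * n) :=
  (d.endpoints i).max' (d.endpoints_nonempty i)

/-- Chords `i` and `j` cross: exactly one endpoint of `j` lies strictly between
the two endpoints of `i`. -/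
def Crosses (d : ChordDiagram n) (i j : Fin n) : Prop :=
  Xor' (d.lo i < d.lo j ∧ d.lo j < d.hi i) (d.lo i < d.hi j ∧ d.hi j < d.hi i)

/-- The intersection graph `γ(d)` of the chord diagram `d`. -/
def interGraph (d : ChordDiagram n) : SimpleGraph (Fin n) where
  Adj i j := i ≠ j ∧ (d.Crosses i j ∨ d.Crosses j i)
  symm := ⟨fun i j h => ⟨h.1.symm, h.2.symm⟩⟩
  loopless := ⟨fun i h => h.1 rfl⟩

lemma chord_lo (d : ChordDiagram n) (i : Fin n) : d.chord (d.lo i) = i := by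
  have h := (d.endpoints i).min'_mem (d.endpoints_nonempty i)
  exact (Finset.mem_filter.mp h).2

/-- An orientation of a chord diagram: a choice of a beginning point for each
chord (the other endpoint being its end). -/
def Orientation (d : ChordDiagram n) : Type :=
  { b : Fin n → Fin (2 * n) // ∀ i, d.chord (b i) = i }

/-- The end of the chord `i`, i.e. its endpoint other than the beginning. -/
def endOf (d : ChordDiagram n) (o : d.Orientation) (i : Fin n) : Fin (2 * n) :=
  if o.1 i = d.lo i then d.hi i else d.lo i

/-- The point `z` lies on the arc going in the positive direction from `a` to `b`. -/
def InArc {m : ℕ} (a b z : Fin m) : Prop :=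
  if a < b then a < z ∧ z < b else a < z ∨ z < b

/-- The direction induced by an orientation of the chords on the edges of the
intersection graph: the edge between `i` and `j` is directed from `i` to `j`
iff the beginning of `j` lies on the arc going in the positive direction from
the beginning of `i` to the end of `i`. -/
def dir (d : ChordDiagram n) (o : d.Orientation) (i j : Fin n) : Prop :=
  InArc (o.1 i) (d.endOf o i) (o.1 j)

/-- The canonical orientation: every chord begins at its smaller endpoint. -/
def canonical (d : ChordDiagram n) : d.Orientation :=
  ⟨d.lo, d.chord_lo⟩

end ChordDiagram

/-- The weight system `R_k`: the sum of the signs of the `2k`-cycles of the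
directed intersection graph (for the canonical orientation of the chords). -/
noncomputable def Rk (k : ℕ) {n : ℕ} (d : ChordDiagram n) : ℤ :=
  signedCycleSum d.interGraph (d.dir d.canonical) (2 * k)

/-- When the point at position `p` is moved to position `q` (keeping the relative
order of all the other points), `moveFun p q r` is the old position of the point
occupying the position `r` after the move. -/
def moveFun {m : ℕ} (p q : Fin m) (r : Fin m) : Fin m :=
  if r = q then p
  else if h : (p : ℕ) ≤ (r : ℕ) ∧ (r : ℕ) < (q : ℕ) then
    ⟨(r : ℕ) + 1, by have := q.isLt; omega⟩
  else if h' : (q : ℕ) < (r : ℕ) ∧ (r : ℕ) ≤ (p : ℕ) then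
    ⟨(r : ℕ) - 1, by have := r.isLt; omega⟩
  else r

/-- The invariant `w_C`: `1` if the adjacency matrix of the graph over `ZMod 2`
is nondegenerate, `0` otherwise. -/
noncomputable def wC {V : Type} [Fintype V] (G : SimpleGraph V) : ℤ :=
  if (G.adjMatrix (ZMod 2)).det ≠ 0 then 1 else 0

/-- All set partitions of `Fin n` into nonempty blocks. -/
noncomputable def finPartitions (n : ℕ) : Finset (Finset (Finset (Fin n))) :=
  Finset.univ.filter (fun P =>
    (∀ s ∈ P, s.Nonempty) ∧ ∀ x : Fin n, ∃! s, s ∈ P ∧ x ∈ s)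

/-- A `4`-invariant of finite simple graphs: an integer-valued, isomorphism
invariant function satisfying the `4`-term relation for graphs. -/
structure FourInvariant where
  val : ∀ n : ℕ, SimpleGraph (Fin n) → ℤ
  iso_invariant : ∀ {n m : ℕ} (G : SimpleGraph (Fin n)) (H : SimpleGraph (Fin m)),
    Nonempty (G ≃g H) → val n G = val m H
  four_term : ∀ (n : ℕ) (G : SimpleGraph (Fin n)) (A B : Fin n), A ≠ B →
    val n G - val n (toggleEdge G A B) =
      val n (tildeGraph G A B) - val n (toggleEdge (tildeGraph G A B) A B)

/-- The `5`-wheel: a `5`-cycle on the vertices `0, …, 4` together with the hub `5`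
adjacent to all five cycle vertices. -/
def wheel5 : SimpleGraph (Fin 6) :=
  SimpleGraph.fromRel (fun x y =>
    ((x : ℕ) = 5 ∧ (y : ℕ) < 5) ∨
    ((x : ℕ) < 5 ∧ (y : ℕ) < 5 ∧ (y : ℕ) = ((x : ℕ) + 1) % 5))

/-- The triangular prism: two triangles `{0, 1, 2}` and `{3, 4, 5}` joined by the
perfect matching `i — i + 3`. -/
def prism : SimpleGraph (Fin 6) :=
  SimpleGraph.fromRel (fun x y =>
    ((x : ℕ) < 3 ∧ (y : ℕ) < 3 ∧ x ≠ y) ∨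
    (3 ≤ (x : ℕ) ∧ 3 ≤ (y : ℕ) ∧ x ≠ y) ∨
    ((y : ℕ) = (x : ℕ) + 3))


/-!
The dihedral group of order `2l` acts freely on injective maps `Fin l → V` by precomposition
once `l ≥ 3`. The maps tracing an `l`-cycle form an invariant set, and so do those of sign `-1`:
a reflection reverses all `l` edges of the cycle, which preserves the parity of the number of
forward edges because `l` is even. Hence both sets have cardinality divisible by `2l`, say
`2l·a` and `2l·b`, so that `E_l = a` while the signed count is `(2l·a - 2·2l·b) / 2l = a - 2b`.
-/

open Fin.CommRing

theorem MulAction.card_group_dvd_card_of_free {G X : Type*} [Group G] [Fintype G]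
    [MulAction G X] [Fintype X] (h : ∀ (g : G) (x : X), g • x = x → g = 1) :
    Fintype.card G ∣ Fintype.card X := by
  classical
  have := MulAction.sum_card_fixedBy_eq_card_orbits_mul_card_group G X
  rw [Finset.sum_eq_single 1] at this
  · rw [Fintype.card_congr ((Equiv.setCongr (MulAction.fixedBy_one_eq_univ X G)).trans
      (Equiv.Set.univ X))] at this
    exact Dvd.intro_left _ this.symm
  · intro g _ hg
    exact Fintype.card_eq_zero_iff.mpr ⟨fun x => hg (h g x x.2)⟩
  · simp

namespace DihedralGroup

variable {n : ℕ}

-- The convention `sr i * sr j = r (j - i)` forces `sr i` to act as `j ↦ -i - j`.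
instance : SMul (DihedralGroup n) (ZMod n) where
  smul
    | r i, j => i + j
    | sr i, j => -i - j

@[simp] lemma r_smul (i j : ZMod n) : r i • j = i + j := rfl

@[simp] lemma sr_smul (i j : ZMod n) : sr i • j = -i - j := rfl

instance : MulAction (DihedralGroup n) (ZMod n) where
  one_smul := zero_add
  mul_smul := by
    rintro (a | a) (b | b) j <;>
      simp only [r_mul_r, r_mul_sr, sr_mul_r, sr_mul_sr, r_smul, sr_smul] <;> ring

lemma eq_one_of_forall_smul_eq (hn : 3 ≤ n) {g : DihedralGroup n}
    (hg : ∀ j : ZMod n, g • j = j) : g = 1 := by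
  rcases g with i | i
  · obtain rfl : i = 0 := by simpa using hg 0
    exact r_zero
  · have h0 : -i = 0 := by simpa using hg 0
    have h2 : ((2 : ℕ) : ZMod n) = 0 := by
      have h1 := hg 1
      rw [sr_smul] at h1
      push_cast
      linear_combination h0 - h1
    rw [ZMod.natCast_eq_zero_iff] at h2
    exact absurd (Nat.le_of_dvd two_pos h2) (by omega)

instance {l : ℕ} [NeZero l] : MulAction (DihedralGroup l) (Fin l) :=
  (ZMod.finEquiv l).toEquiv.mulAction _

instance {l : ℕ} [NeZero l] {V : Type} : MulAction (DihedralGroup l) (Fin l → V) :=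
  arrowAction

section

variable {l : ℕ} [NeZero l]

lemma smul_fin_def (g : DihedralGroup l) (j : Fin l) :
    g • j = (ZMod.finEquiv l).symm (g • ZMod.finEquiv l j) := rfl

lemma r_smul_fin (i : ZMod l) (j : Fin l) : r i • j = (ZMod.finEquiv l).symm i + j := by
  rw [smul_fin_def, r_smul]
  simp

lemma sr_smul_fin (i : ZMod l) (j : Fin l) : sr i • j = -(ZMod.finEquiv l).symm i - j := by
  rw [smul_fin_def, sr_smul]
  simp

lemma eq_one_of_forall_smul_fin_eq (hl : 3 ≤ l) {g : DihedralGroup l}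
    (hg : ∀ j : Fin l, g • j = j) : g = 1 := by
  refine eq_one_of_forall_smul_eq hl fun j => (ZMod.finEquiv l).symm.injective ?_
  simpa only [smul_fin_def, RingEquiv.apply_symm_apply] using hg ((ZMod.finEquiv l).symm j)

lemma eq_one_of_smul_eq_of_injective {V : Type} (hl : 3 ≤ l) {f : Fin l → V}
    (hf : Function.Injective f) {g : DihedralGroup l} (hg : g • f = f) : g = 1 :=
  inv_eq_one.mp (eq_one_of_forall_smul_fin_eq hl fun j => hf (congrFun hg j))

end

end DihedralGroup

open DihedralGroup

section

variable {V : Type} {l : ℕ} [NeZero l]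

theorem two_mul_dvd_card_filter_of_smul_mem [Fintype V] (hl : 3 ≤ l)
    {P : (Fin l → V) → Prop} [DecidablePred P]
    (hP : ∀ (g : DihedralGroup l) f, P f → P (g • f))
    (hinj : ∀ f, P f → Function.Injective f) :
    2 * l ∣ (univ.filter P).card := by
  let p : SubMulAction (DihedralGroup l) (Fin l → V) := ⟨{f | P f}, fun g _ hf => hP g _ hf⟩
  have hfree : ∀ (g : DihedralGroup l) (f : p), g • f = f → g = 1 := fun g f hg =>
    eq_one_of_smul_eq_of_injective hl (hinj f f.2) (congrArg Subtype.val hg)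
  have := MulAction.card_group_dvd_card_of_free hfree
  rw [DihedralGroup.card, Fintype.card_subtype] at this
  convert this using 2
  ext f
  simp only [mem_filter_univ]
  rfl

lemma cyclicSucc_eq_add_one (a : Fin l) : cyclicSucc a = a + 1 := by
  apply Fin.ext
  simp [cyclicSucc, Fin.add_def, Nat.add_mod]

lemma IsCycleMap.adj_add_one {G : SimpleGraph V} {f : Fin l → V} (hf : IsCycleMap G l f)
    (j : Fin l) : G.Adj (f j) (f (j + 1)) :=
  cyclicSucc_eq_add_one j ▸ hf.2 j

lemma IsCycleMap.comp_smul {G : SimpleGraph V} {f : Fin l → V} (hf : IsCycleMap G l f)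
    (g : DihedralGroup l) : IsCycleMap G l (fun j => f (g • j)) := by
  refine ⟨hf.1.comp (MulAction.injective g), fun j => ?_⟩
  rw [cyclicSucc_eq_add_one]
  rcases g with i | i
  · simpa only [r_smul_fin, add_assoc] using hf.adj_add_one (_ + j)
  · have h := (hf.adj_add_one (-(ZMod.finEquiv l).symm i - (j + 1))).symm
    rw [sub_add_eq_sub_sub, sub_add_cancel] at h
    simpa only [sr_smul_fin, sub_add_eq_sub_sub] using h

lemma IsCycleMap.smul {G : SimpleGraph V} {f : Fin l → V} (hf : IsCycleMap G l f)
    (g : DihedralGroup l) : IsCycleMap G l (g • f) :=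
  hf.comp_smul g⁻¹

lemma cycleSign_comp_smul {G : SimpleGraph V} {o : V → V → Prop} (ho : IsOrientation G o)
    (hl : Even l) {f : Fin l → V} (hf : IsCycleMap G l f) (g : DihedralGroup l) :
    cycleSign o (fun j => f (g • j)) = cycleSign o f := by
  simp only [cycleSign, cyclicSucc_eq_add_one]
  rcases g with i | i
  · congr 1
    refine Finset.card_equiv (Equiv.addLeft ((ZMod.finEquiv l).symm i)) fun j => ?_
    simp [r_smul_fin, add_assoc]
  · apply neg_one_pow_congr
    have hrev : (univ.filter fun j => o (f (sr i • j)) (f (sr i • (j + 1)))).card =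
        (univ.filter fun y => ¬ o (f y) (f (y + 1))).card := by
      refine Finset.card_equiv (Equiv.subLeft (-(ZMod.finEquiv l).symm i - 1)) fun j => ?_
      have h := (hf.adj_add_one (-(ZMod.finEquiv l).symm i - j - 1)).symm
      rw [sub_add_cancel] at h
      simpa [sr_smul_fin, sub_add_eq_sub_sub, sub_right_comm] using ho h
    rw [hrev, ← Nat.even_add, add_comm, card_filter_add_card_filter_not, card_univ,
      Fintype.card_fin]
    exact hl

end

lemma sum_cycleSign {V : Type} {l : ℕ} (o : V → V → Prop) (s : Finset (Fin l → V)) :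
    ∑ f ∈ s, cycleSign o f = s.card - 2 * (s.filter fun f => cycleSign o f = -1).card := by
  have hpos : ∀ f ∈ s.filter (fun f => ¬ cycleSign o f = -1), cycleSign o f = 1 := fun f hf =>
    (neg_one_pow_eq_or ℤ _).resolve_right (mem_filter.mp hf).2
  rw [← sum_filter_add_sum_filter_not s (fun f => cycleSign o f = -1),
    sum_congr rfl fun f hf => (mem_filter.mp hf).2, sum_congr rfl hpos,
    ← card_filter_add_card_filter_not (s := s) (fun f => cycleSign o f = -1)]
  simp only [sum_const, Nat.cast_add]
  ring

theorem signedCycleSum_modEq_cycleCount {V : Type} [Fintype V] {G : SimpleGraph V}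
    {o : V → V → Prop} (ho : IsOrientation G o) {l : ℕ} (hl3 : 3 ≤ l) (hl : Even l) :
    signedCycleSum G o l ≡ (cycleCount G l : ℤ) [ZMOD 2] := by
  have : NeZero l := ⟨by omega⟩
  set C := univ.filter (IsCycleMap G l)
  obtain ⟨a, ha⟩ : 2 * l ∣ C.card :=
    two_mul_dvd_card_filter_of_smul_mem hl3 (fun g _ hf => hf.smul g) fun _ hf => hf.1
  obtain ⟨b, hb⟩ : 2 * l ∣ (C.filter fun f => cycleSign o f = -1).card := by
    rw [filter_filter]
    refine two_mul_dvd_card_filter_of_smul_mem hl3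
      (P := fun f => IsCycleMap G l f ∧ cycleSign o f = -1)
      (fun g f hf => ⟨hf.1.smul g, ?_⟩) fun _ hf => hf.1.1
    rw [← hf.2]
    exact cycleSign_comp_smul ho hl hf.1 g⁻¹
  have hsum : signedCycleSum G o l = a - 2 * b := by
    rw [signedCycleSum, sum_cycleSign, ha, hb, Int.ediv_eq_of_eq_mul_left (by positivity)]
    push_cast
    ring
  have hcount : cycleCount G l = a := by
    rw [cycleCount, ha, Nat.mul_div_cancel_left _ (by omega)]
  rw [hsum, hcount, Int.modEq_iff_dvd]
  exact ⟨b, by ring⟩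

namespace ChordDiagram

variable {n : ℕ}

lemma card_endpoints (d : ChordDiagram n) (i : Fin n) : (d.endpoints i).card = 2 :=
  d.fiber_two i

lemma lo_lt_hi (d : ChordDiagram n) (i : Fin n) : d.lo i < d.hi i :=
  Finset.min'_lt_max'_of_card _ (by rw [card_endpoints]; norm_num)

lemma chord_hi (d : ChordDiagram n) (i : Fin n) : d.chord (d.hi i) = i :=
  (Finset.mem_filter.mp ((d.endpoints i).max'_mem (d.endpoints_nonempty i))).2

lemma dir_canonical_iff (d : ChordDiagram n) (i j : Fin n) :
    d.dir d.canonical i j ↔ d.lo i < d.lo j ∧ d.lo j < d.hi i := by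
  simp [dir, canonical, endOf, InArc, d.lo_lt_hi i]

lemma isOrientation_dir (d : ChordDiagram n) :
    IsOrientation d.interGraph (d.dir d.canonical) := by
  rintro x y ⟨hne, hcross⟩
  have hval_ne : ∀ a b, d.chord a = x → d.chord b = y → (a : ℕ) ≠ b :=
    fun a b ha hb h => hne (ha ▸ hb ▸ congrArg d.chord (Fin.ext h))
  have := hval_ne _ _ (d.chord_lo x) (d.chord_lo y)
  have := hval_ne _ _ (d.chord_lo x) (d.chord_hi y)
  have := hval_ne _ _ (d.chord_hi x) (d.chord_lo y)
  have := hval_ne _ _ (d.chord_hi x) (d.chord_hi y)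
  have := d.lo_lt_hi x
  have := d.lo_lt_hi y
  rw [dir_canonical_iff, dir_canonical_iff]
  rcases hcross with (⟨_, _⟩ | ⟨_, _⟩) | (⟨_, _⟩ | ⟨_, _⟩) <;> omega

end ChordDiagram

theorem Rk_modEq_cycleCount (k : ℕ) (hk : 2 ≤ k) {n : ℕ} (d : ChordDiagram n) :
    Rk k d ≡ (cycleCount d.interGraph (2 * k) : ℤ) [ZMOD 2] :=
  signedCycleSum_modEq_cycleCount d.isOrientation_dir (by omega) (even_two_mul k)
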